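/- Let {|ξ_i⟩} and {|η_i⟩} be two orthonormal bases of a finite-dimensional H with P_{ξ_j} = P_{η_j} for some index j (P denoting the rank-one projection). If ∑_i |P_{ξ_i} − P_{η_i}| is proportional to the identity, then P_{ξ_i} = P_{η_i} for all i. -/

import Mathlib

/-!
The vector `ξ j₀` spans the range of `P_{ξ j₀} = P_{η j₀}`, so it is orthogonal to every other `ξ i`
and `η i` and hence lies in the kernel of every `P_{ξ i} - P_{η i}`, and therefore of every
`|P_{ξ i} - P_{η i}|`. Applying `∑ i |P_{ξ i} - P_{η i}| = c • 1` to it forces `c = 0`, and a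
vanishing sum of positive semidefinite matrices has vanishing terms.
-/

open scoped ComplexOrder

/-- The rank-one projection `|ψ⟩⟨ψ|` as a matrix. -/
noncomputable def projMat {ι : Type*} [Fintype ι] (ψ : ι → ℂ) : Matrix ι ι ℂ :=
  Matrix.vecMulVec ψ (star ψ)

/-- The operator absolute value `|A| = √(AᴴA)`. -/
noncomputable def matAbs {d : Type*} [Fintype d] [DecidableEq d]
    (A : Matrix d d ℂ) : Matrix d d ℂ :=
  (Matrix.posSemidef_conjTranspose_mul_self A).1.eigenvectorUnitary.1 *
    Matrix.diagonal ((↑) ∘ (√·) ∘ (Matrix.posSemidef_conjTranspose_mul_self A).1.eigenvalues) *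
    (star (Matrix.posSemidef_conjTranspose_mul_self A).1.eigenvectorUnitary : Matrix d d ℂ)

open scoped MatrixOrder
open Matrix

section projMat

variable {ι : Type*} [Fintype ι]

lemma projMat_mulVec (ψ x : ι → ℂ) : projMat ψ *ᵥ x = (star ψ ⬝ᵥ x) • ψ := by
  ext i
  simp only [projMat, mulVec, dotProduct, vecMulVec_apply, Pi.smul_apply, smul_eq_mul,
    Finset.sum_mul, Pi.star_apply]
  exact Finset.sum_congr rfl fun k _ => by ring

lemma eq_smul_of_projMat_eq {u w : ι → ℂ} (hu : star u ⬝ᵥ u = 1)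
    (h : projMat u = projMat w) : u = (star w ⬝ᵥ u) • w := by
  calc u = projMat u *ᵥ u := by rw [projMat_mulVec, hu, one_smul]
    _ = (star w ⬝ᵥ u) • w := by rw [h, projMat_mulVec]

lemma projMat_sub_projMat_mulVec_eq_zero {ψ φ x : ι → ℂ} (hψ : star ψ ⬝ᵥ x = 0)
    (hφ : star φ ⬝ᵥ x = 0) : (projMat ψ - projMat φ) *ᵥ x = 0 := by
  rw [sub_mulVec, projMat_mulVec, projMat_mulVec, hψ, hφ, zero_smul, zero_smul, sub_self]

end projMat

section matAbs

variable {d : Type*} [Fintype d] [DecidableEq d]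

lemma matAbs_posSemidef (A : Matrix d d ℂ) : (matAbs A).PosSemidef := by
  have hdiag : (diagonal ((↑) ∘ (√·) ∘
      (posSemidef_conjTranspose_mul_self A).1.eigenvalues) : Matrix d d ℂ).PosSemidef :=
    posSemidef_diagonal_iff.mpr fun i => by simp
  exact hdiag.mul_mul_conjTranspose_same _

lemma matAbs_mul_self (A : Matrix d d ℂ) : matAbs A * matAbs A = Aᴴ * A := by
  unfold matAbs
  set h := posSemidef_conjTranspose_mul_self A
  have hU : (star h.1.eigenvectorUnitary.1 : Matrix d d ℂ) * h.1.eigenvectorUnitary.1 = 1 :=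
    h.1.eigenvectorUnitary.2.1
  have hspectral := h.1.spectral_theorem
  rw [Unitary.conjStarAlgAut_apply] at hspectral
  refine Eq.trans ?_ hspectral.symm
  simp only [mul_assoc]
  rw [← mul_assoc (star h.1.eigenvectorUnitary.1) h.1.eigenvectorUnitary.1, hU, one_mul,
    ← mul_assoc (diagonal _), diagonal_mul_diagonal]
  congr 3
  funext i
  simp only [Function.comp_apply]
  rw [← Complex.ofReal_mul, Real.mul_self_sqrt (h.eigenvalues_nonneg i)]
  rfl

lemma matAbs_mulVec_eq_zero {A : Matrix d d ℂ} {v : d → ℂ} (h : A *ᵥ v = 0) :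
    matAbs A *ᵥ v = 0 := by
  rw [← conjTranspose_mul_self_mulVec_eq_zero (matAbs A) v,
    (matAbs_posSemidef A).isHermitian.eq, matAbs_mul_self,
    conjTranspose_mul_self_mulVec_eq_zero, h]

lemma eq_zero_of_matAbs_eq_zero {A : Matrix d d ℂ} (h : matAbs A = 0) : A = 0 := by
  rw [← conjTranspose_mul_self_eq_zero, ← matAbs_mul_self, h, mul_zero]

theorem eq_zero_of_sum_matAbs_eq_smul_one {κ : Type*} {s : Finset κ} {A : κ → Matrix d d ℂ}
    {c : ℂ} {v : d → ℂ} (hv : v ≠ 0) (hker : ∀ i ∈ s, A i *ᵥ v = 0)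
    (hsum : ∑ i ∈ s, matAbs (A i) = c • 1) : ∀ i ∈ s, A i = 0 := by
  have hc : c = 0 := by
    have hcv : c • v = 0 := by
      rw [← one_mulVec v, ← smul_mulVec, ← hsum, sum_mulVec]
      exact Finset.sum_eq_zero fun i hi => matAbs_mulVec_eq_zero (hker i hi)
    exact (smul_eq_zero.mp hcv).resolve_right hv
  rw [hc, zero_smul, Finset.sum_eq_zero_iff_of_nonneg
    fun i _ => (matAbs_posSemidef (A i)).nonneg] at hsum
  exact fun i hi => eq_zero_of_matAbs_eq_zero (hsum i hi)

end matAbs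

theorem eq_of_common_projection_and_sum_abs_propId
    {ι : Type*} [Fintype ι] [DecidableEq ι]
    (ξ η : ι → ι → ℂ)
    (hξ : ∀ i j, (∑ k, (starRingEnd ℂ) (ξ i k) * ξ j k) = if i = j then 1 else 0)
    (hη : ∀ i j, (∑ k, (starRingEnd ℂ) (η i k) * η j k) = if i = j then 1 else 0)
    (j₀ : ι) (hj₀ : projMat (ξ j₀) = projMat (η j₀))
    (hprop : ∃ c : ℂ,
      (∑ i, matAbs (projMat (ξ i) - projMat (η i))) = c • (1 : Matrix ι ι ℂ)) :
    ∀ i, projMat (ξ i) = projMat (η i) := by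
  obtain ⟨c, hc⟩ := hprop
  have hξ' : ∀ i j, star (ξ i) ⬝ᵥ ξ j = if i = j then 1 else 0 := hξ
  have hη' : ∀ i j, star (η i) ⬝ᵥ η j = if i = j then 1 else 0 := hη
  have hξ₀ : ξ j₀ = (star (η j₀) ⬝ᵥ ξ j₀) • η j₀ :=
    eq_smul_of_projMat_eq (by simpa using hξ' j₀ j₀) hj₀
  have hker : ∀ i ∈ Finset.univ, (projMat (ξ i) - projMat (η i)) *ᵥ ξ j₀ = 0 := by
    intro i _
    rcases eq_or_ne i j₀ with rfl | hi
    · rw [hj₀, sub_self, zero_mulVec]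
    · refine projMat_sub_projMat_mulVec_eq_zero (by simp [hξ', hi]) ?_
      rw [hξ₀, dotProduct_smul, hη', if_neg hi, smul_zero]
  have hξ₀_ne : ξ j₀ ≠ 0 := fun h => by simpa [h] using hξ' j₀ j₀
  intro i
  exact sub_eq_zero.mp (eq_zero_of_sum_matAbs_eq_smul_one hξ₀_ne hker hc i (Finset.mem_univ i))
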